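/- Worst-case substitution datasets for a single iteration of the without-replacement subsampled Gaussian mechanism at ε ≥ 0: let σ > 0, let n, b be integers with 1 ≤ b ≤ n, and set γ := b/n. For every pair of tuples D, D' ∈ [−1,1]^n differing in exactly one entry and every α ≥ 1, H_α(M_{n,b}(D) ‖ M_{n,b}(D')) ≤ H_α((1−γ)·N(−b,σ²) + γ·N(2−b,σ²) ‖ N(−b,σ²)). Moreover this bound is realized: for D = (−1,…,−1,1) and D' = (−1,…,−1,−1), M_{n,b}(D) = (1−γ)·N(−b,σ²) + γ·N(2−b,σ²) and M_{n,b}(D') = N(−b,σ²). -/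

import Mathlib

open MeasureTheory ProbabilityTheory
open scoped ENNReal NNReal

/-- Hockey-stick divergence: `H_α(P ‖ Q) = sup_{E measurable} (P(E) − α·Q(E))`. -/
noncomputable def hsDiv {X : Type*} [MeasurableSpace X] (α : ℝ) (P Q : Measure X) : ℝ :=
  ⨆ E : {E : Set X // MeasurableSet E}, ((P E).toReal - α * (Q E).toReal)

/-- The without-replacement subsampled Gaussian mechanism:
`M_{m,b}(x) = binom(m,b)⁻¹ ∑_{S ⊆ [m], |S| = b} N(∑_{i∈S} x_i, σ²)`. -/
noncomputable def worGauss (σ : ℝ) (b : ℕ) {m : ℕ} (x : Fin m → ℝ) : Measure ℝ :=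
  ((m.choose b : ℝ≥0∞))⁻¹ •
    ∑ S ∈ Finset.powersetCard b (Finset.univ : Finset (Fin m)),
      gaussianReal (∑ i ∈ S, x i) ⟨σ ^ 2, sq_nonneg σ⟩

/-!
Fix a measurable `E` and write `F c = N(c, σ²)(E)`. Split the `b`-subsets `S` according to whether
they contain the index `i` where `D` and `D'` differ. Each `T ∌ i` arises as `S - i + j` from
exactly `b` pairs `(S ∋ i, j ∉ S)`, so `M(D)(E) - α M(D')(E)` is the average over `S ∋ i` of
`F(u) - α F(p) - w ∑_{j ∉ S} F(q_j)`, with `w = (α - 1) / b` and `p`, `q_j` all within `2` of `u`.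

When `|u - p| ≤ |a - d|`, a single Gaussian channel `x ↦ N(θx + μ, (1 - θ²)σ²)` carries `N(a)` to
`N(u)` and `N(d)` to `N(p)`, so `(F u, F p)` lies in the convex region of pairs
`(∫ g dN(a), ∫ g dN(d))` over tests `0 ≤ g ≤ 1`. By Neyman–Pearson (a Hahn decomposition of
`c N(d)` against `N(a)`) every point `(x, y)` of that region has `x - c y ≤ H_c(N(a) ‖ N(d))`.
With `a = 2 - b`, `d = -b` and the convex combination of weights `α, w, …, w`, each summand is at
most `H_c(N(2 - b) ‖ N(-b))` for `c = α + (n - b) w`, and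
`γ H_c(N(2 - b) ‖ N(-b)) = H_α((1 - γ) N(-b) + γ N(2 - b) ‖ N(-b))`.
-/

open Finset

section HockeyStick

variable {X : Type*} [MeasurableSpace X] {P Q : Measure X}

lemma hsDiv_le {α B : ℝ} (h : ∀ E, MeasurableSet E → (P E).toReal - α * (Q E).toReal ≤ B) :
    hsDiv α P Q ≤ B :=
  have : Nonempty {E : Set X // MeasurableSet E} := ⟨⟨∅, .empty⟩⟩
  ciSup_le fun E => h E.1 E.2

lemma le_hsDiv [IsFiniteMeasure P] {α : ℝ} (hα : 0 ≤ α) {E : Set X} (hE : MeasurableSet E) :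
    (P E).toReal - α * (Q E).toReal ≤ hsDiv α P Q := by
  refine le_ciSup (f := fun E : {E : Set X // MeasurableSet E} => (P E).toReal - α * (Q E).toReal)
    ⟨(P .univ).toReal, ?_⟩ ⟨E, hE⟩
  rintro _ ⟨F, rfl⟩
  have hPF := ENNReal.toReal_mono (measure_ne_top P .univ) (measure_mono (Set.subset_univ F.1))
  have hQF : 0 ≤ α * (Q F).toReal := mul_nonneg hα ENNReal.toReal_nonneg
  dsimp only
  linarith

lemma hsDiv_smul_add_smul_self [IsFiniteMeasure P] [IsFiniteMeasure Q] (α : ℝ) {γ : ℝ}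
    (hγ0 : 0 < γ) (hγ1 : γ ≤ 1) :
    hsDiv α (ENNReal.ofReal (1 - γ) • Q + ENNReal.ofReal γ • P) Q =
      γ * hsDiv ((α - 1 + γ) / γ) P Q := by
  rw [hsDiv, hsDiv, Real.mul_iSup_of_nonneg hγ0.le]
  congr 1
  ext E
  rw [Measure.add_apply, Measure.smul_apply, Measure.smul_apply, smul_eq_mul, smul_eq_mul,
    ENNReal.toReal_add (by finiteness) (by finiteness), ENNReal.toReal_mul, ENNReal.toReal_mul,
    ENNReal.toReal_ofReal (by linarith), ENNReal.toReal_ofReal hγ0.le]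
  field_simp
  ring

def testRegion (P Q : Measure X) : Set (ℝ × ℝ) :=
  {z | ∃ g : X → ℝ, Measurable g ∧ (∀ x, g x ∈ Set.Icc 0 1) ∧
    ∫ x, g x ∂P = z.1 ∧ ∫ x, g x ∂Q = z.2}

lemma integrable_of_forall_mem_Icc {μ : Measure X} [IsFiniteMeasure μ] {g : X → ℝ}
    (hg : Measurable g) (hg01 : ∀ x, g x ∈ Set.Icc 0 1) : Integrable g μ :=
  .of_bound hg.aestronglyMeasurable 1 <| .of_forall fun x => by
    rw [Real.norm_eq_abs, abs_le]
    constructor <;> linarith [(hg01 x).1, (hg01 x).2]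

lemma convex_testRegion [IsFiniteMeasure P] [IsFiniteMeasure Q] : Convex ℝ (testRegion P Q) := by
  rintro z ⟨g, hg, hg01, hgP, hgQ⟩ z' ⟨g', hg', hg'01, hg'P, hg'Q⟩ a a' ha ha' haa'
  have hint : ∀ μ : Measure X, IsFiniteMeasure μ →
      ∫ x, a * g x + a' * g' x ∂μ = a * ∫ x, g x ∂μ + a' * ∫ x, g' x ∂μ := fun μ _ => by
    rw [integral_add ((integrable_of_forall_mem_Icc hg hg01).const_mul a)
      ((integrable_of_forall_mem_Icc hg' hg'01).const_mul a'), integral_const_mul,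
      integral_const_mul]
  refine ⟨fun x => a * g x + a' * g' x, (hg.const_mul a).add (hg'.const_mul a'),
    fun x => ⟨?_, ?_⟩, ?_, ?_⟩
  · nlinarith [(hg01 x).1, (hg'01 x).1]
  · nlinarith [(hg01 x).2, (hg'01 x).2]
  · rw [hint P inferInstance, hgP, hg'P]; rfl
  · rw [hint Q inferInstance, hgQ, hg'Q]; rfl

end HockeyStick

section NeymanPearson

variable {X : Type*} [MeasurableSpace X] {P Q : Measure X} [IsFiniteMeasure P] [IsFiniteMeasure Q]

lemma sub_mul_le_hsDiv_of_mem_testRegion {c : ℝ} (hc : 0 ≤ c) {z : ℝ × ℝ}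
    (hz : z ∈ testRegion P Q) : z.1 - c * z.2 ≤ hsDiv c P Q := by
  obtain ⟨g, hg, hg01, hgP, hgQ⟩ := hz
  have := Q.smul_finite (c := ENNReal.ofReal c) ENNReal.ofReal_ne_top
  obtain ⟨s, hs⟩ := exists_isHahnDecomposition (ENNReal.ofReal c • Q) P
  have hint : ∀ μ : Measure X, IsFiniteMeasure μ → Integrable g μ := fun μ _ =>
    integrable_of_forall_mem_Icc hg hg01
  have hcQ : ∀ t (f : X → ℝ), ∫ x in t, f x ∂(ENNReal.ofReal c • Q) = c * ∫ x in t, f x ∂Q :=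
    fun t f => by rw [Measure.restrict_smul, integral_smul_measure, ENNReal.toReal_ofReal hc,
      smul_eq_mul]
  have h_compl : ∫ x in sᶜ, g x ∂P ≤ c * ∫ x in sᶜ, g x ∂Q := by
    rw [← hcQ]
    exact integral_mono_measure hs.ge_on_compl (.of_forall fun x => (hg01 x).1)
      (hint _ inferInstance)
  have h_on : c * ∫ x in s, (1 - g x) ∂Q ≤ ∫ x in s, (1 - g x) ∂P := by
    rw [← hcQ]
    exact integral_mono_measure hs.le_on (.of_forall fun x => sub_nonneg.2 (hg01 x).2)
      ((integrable_const 1).sub (hint _ inferInstance))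
  rw [integral_sub (integrable_const 1) (hint _ inferInstance),
    integral_sub (integrable_const 1) (hint _ inferInstance), setIntegral_const, setIntegral_const,
    measureReal_def, measureReal_def, smul_eq_mul, smul_eq_mul, mul_one, mul_one] at h_on
  rw [← hgP, ← hgQ, ← integral_add_compl hs.measurableSet (hint P inferInstance),
    ← integral_add_compl hs.measurableSet (hint Q inferInstance)]
  refine le_trans ?_ (le_hsDiv hc hs.measurableSet)
  linarith

lemma sub_sum_mul_le_hsDiv_of_mem_testRegion {ι : Type*} {t : Finset ι} {w : ι → ℝ}
    (hw : ∀ j ∈ t, 0 ≤ w j) (hW : 0 < ∑ j ∈ t, w j) {x : ℝ} {y : ι → ℝ}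
    (hxy : ∀ j ∈ t, (x, y j) ∈ testRegion P Q) :
    x - ∑ j ∈ t, w j * y j ≤ hsDiv (∑ j ∈ t, w j) P Q := by
  have h := sub_mul_le_hsDiv_of_mem_testRegion hW.le (convex_testRegion.centerMass_mem hw hW hxy)
  simp only [centerMass, Prod.smul_fst, Prod.smul_snd, Prod.fst_sum, Prod.snd_sum, smul_eq_mul,
    ← sum_mul] at h
  rwa [inv_mul_cancel_left₀ hW.ne', mul_inv_cancel_left₀ hW.ne'] at h

end NeymanPearson

lemma measurable_gaussianReal_apply {f : ℝ → ℝ} (hf : Measurable f) (t : ℝ≥0) {E : Set ℝ}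
    (hE : MeasurableSet E) : Measurable fun x => gaussianReal (f x) t E :=
  (Measure.measurable_coe hE).comp (by fun_prop)

lemma lintegral_gaussianReal_affine_apply (m θ μ : ℝ) (v t : ℝ≥0) {E : Set ℝ}
    (hE : MeasurableSet E) :
    ∫⁻ x, gaussianReal (θ * x + μ) t E ∂gaussianReal m v =
      gaussianReal (θ * m + μ) ((.mk (θ ^ 2) (sq_nonneg θ) : ℝ≥0) * v + t) E := by
  have hmap : (gaussianReal m v).map (fun x => θ * x + μ) =
      gaussianReal (θ * m + μ) ((.mk (θ ^ 2) (sq_nonneg θ) : ℝ≥0) * v) := by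
    rw [show (fun x => θ * x + μ) = (· + μ) ∘ (θ * ·) from rfl,
      ← Measure.map_map (measurable_add_const μ) (measurable_const_mul θ),
      gaussianReal_map_const_mul, gaussianReal_map_add_const]
  have hshift : ∀ y, ∫⁻ z, E.indicator 1 (y + z) ∂gaussianReal 0 t = gaussianReal y t E := by
    intro y
    rw [← lintegral_map (measurable_one.indicator hE) (measurable_const_add y),
      gaussianReal_map_const_add, zero_add, lintegral_indicator_one hE]
  rw [← add_zero (θ * m + μ), ← gaussianReal_conv_gaussianReal, ← lintegral_indicator_one hE,
    Measure.lintegral_conv (measurable_one.indicator hE)]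
  simp_rw [hshift]
  rw [← hmap]
  exact (lintegral_map (measurable_gaussianReal_apply measurable_id t hE) (by fun_prop)).symm

lemma mem_testRegion_gaussianReal (v : ℝ≥0) {a d u p : ℝ} (h : |u - p| ≤ |a - d|) {E : Set ℝ}
    (hE : MeasurableSet E) :
    ((gaussianReal u v E).toReal, (gaussianReal p v E).toReal) ∈
      testRegion (gaussianReal a v) (gaussianReal d v) := by
  set θ := (u - p) / (a - d)
  set s : ℝ≥0 := .mk (θ ^ 2) (sq_nonneg θ)
  -- For `a = d` this is the junk value `θ = 0`, which works because `h` forces `u = p`.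
  have hθ : θ * (a - d) = u - p := by
    rcases eq_or_ne a d with rfl | had
    · simp only [sub_self, abs_zero, abs_nonpos_iff] at h
      simp [h]
    · exact div_mul_cancel₀ _ (sub_ne_zero.2 had)
  have hs : s ≤ 1 := by
    change θ ^ 2 ≤ 1
    rw [← sq_abs, sq_le_one_iff_abs_le_one, abs_abs, abs_div]
    exact div_le_one_of_le₀ h (abs_nonneg _)
  have hv : s * v + (1 - s) * v = v := by rw [← add_mul, add_tsub_cancel_of_le hs, one_mul]
  have hmeas := measurable_gaussianReal_apply (f := fun x => θ * x + (u - θ * a)) (by fun_prop)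
    ((1 - s) * v) hE
  have hchannel : ∀ c, ∫ x, (gaussianReal (θ * x + (u - θ * a)) ((1 - s) * v) E).toReal
      ∂gaussianReal c v = (gaussianReal (u + θ * (c - a)) v E).toReal := fun c => by
    rw [integral_toReal hmeas.aemeasurable (.of_forall fun _ => measure_lt_top _ _),
      lintegral_gaussianReal_affine_apply c θ _ v _ hE, hv]
    ring_nf
  refine ⟨_, hmeas.ennreal_toReal, fun x => ⟨ENNReal.toReal_nonneg, measureReal_le_one⟩, ?_, ?_⟩
  · rw [hchannel, sub_self, mul_zero, add_zero]
  · rw [hchannel]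
    congr
    linarith

lemma sub_mul_sub_mul_sum_le_hsDiv_gaussianReal (v : ℝ≥0) {a d u p α w : ℝ} (hα : 0 < α)
    (hw : 0 ≤ w) {ι : Type*} {J : Finset ι} {q : ι → ℝ} (hp : |u - p| ≤ |a - d|)
    (hq : ∀ j ∈ J, |u - q j| ≤ |a - d|) {E : Set ℝ} (hE : MeasurableSet E) :
    (gaussianReal u v E).toReal - α * (gaussianReal p v E).toReal -
        w * ∑ j ∈ J, (gaussianReal (q j) v E).toReal ≤
      hsDiv (α + w * #J) (gaussianReal a v) (gaussianReal d v) := by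
  have h := sub_sum_mul_le_hsDiv_of_mem_testRegion (t := insertNone J)
    (w := fun o => o.elim α fun _ => w) (y := fun o => (gaussianReal (o.elim p q) v E).toReal)
    (x := (gaussianReal u v E).toReal) (P := gaussianReal a v) (Q := gaussianReal d v)
    (forall_mem_insertNone.2 ⟨hα.le, fun _ _ => hw⟩) (by simp only [sum_insertNone]; positivity)
    (forall_mem_insertNone.2 ⟨mem_testRegion_gaussianReal v hp hE,
      fun j hj => mem_testRegion_gaussianReal v (hq j hj) hE⟩)
  simp only [sum_insertNone, Option.elim, sum_const, nsmul_eq_mul, ← mul_sum] at h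
  rw [mul_comm (#J : ℝ)] at h
  linarith

section Subsets

variable {ι : Type*} [Fintype ι] [DecidableEq ι]

lemma sum_filter_mem_sum_sdiff_insert_erase {M : Type*} [AddCommMonoid M] (b : ℕ) (i : ι)
    (f : Finset ι → M) :
    ∑ S ∈ powersetCard b univ with i ∈ S, ∑ j ∈ univ \ S, f (insert j (S.erase i)) =
      ∑ T ∈ powersetCard b univ with i ∉ T, b • f T := by
  have hT : ∀ T ∈ {T ∈ powersetCard b (univ : Finset ι) | i ∉ T}, b • f T = ∑ _j ∈ T, f T :=
    fun T hT => by rw [sum_const, (mem_powersetCard.1 (mem_filter.1 hT).1).2]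
  rw [sum_congr rfl hT, sum_sigma', sum_sigma']
  refine sum_nbij' (fun p => ⟨insert p.2 (p.1.erase i), p.2⟩)
    (fun p => ⟨insert i (p.1.erase p.2), p.2⟩) ?_ ?_ ?_ ?_ fun _ _ => rfl
  all_goals
    rintro ⟨S, j⟩ h
    simp only [mem_sigma, mem_filter, mem_powersetCard, subset_univ, mem_sdiff, mem_univ,
      true_and] at h ⊢
  · grind
  · grind
  · rw [erase_insert fun h' => h.2 (mem_of_mem_erase h'), insert_erase h.1.2]
  · rw [erase_insert fun h' => h.1.2 (mem_of_mem_erase h'), insert_erase h.2]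

lemma sum_sub_mul_sum_eq_sum_filter_mem {b : ℕ} (hb : b ≠ 0) (i : ι) {G G' : Finset ι → ℝ}
    (hG : ∀ S, i ∉ S → G S = G' S) (α : ℝ) :
    ∑ S ∈ powersetCard b univ, G S - α * ∑ S ∈ powersetCard b univ, G' S =
      ∑ S ∈ powersetCard b univ with i ∈ S,
        (G S - α * G' S - (α - 1) / b * ∑ j ∈ univ \ S, G (insert j (S.erase i))) := by
  have hout : ∑ S ∈ powersetCard b univ with i ∉ S, G' S =
      ∑ S ∈ powersetCard b univ with i ∉ S, G S :=
    sum_congr rfl fun S hS => (hG S (mem_filter.1 hS).2).symm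
  rw [sum_sub_distrib, sum_sub_distrib, ← mul_sum, ← mul_sum, sum_filter_mem_sum_sdiff_insert_erase,
    ← smul_sum, nsmul_eq_mul, ← sum_filter_add_sum_filter_not _ (i ∈ ·) G,
    ← sum_filter_add_sum_filter_not _ (i ∈ ·) G', hout]
  field_simp
  ring

end Subsets

section Counting

variable {m b : ℕ}

lemma card_filter_not_mem_powersetCard_div_choose (hbn : b ≤ m + 1) (i : Fin (m + 1)) :
    (#{S ∈ powersetCard b (univ : Finset (Fin (m + 1))) | i ∉ S} : ℝ) / (m + 1).choose b =
      1 - b / (m + 1) := by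
  have hout : {S ∈ powersetCard b (univ : Finset (Fin (m + 1))) | i ∉ S} =
      powersetCard b (univ.erase i) := by
    ext S
    simp only [mem_filter, mem_powersetCard, subset_erase, subset_univ, true_and, and_comm]
  have hC : (0 : ℝ) < (m + 1).choose b := by exact_mod_cast Nat.choose_pos hbn
  have hpascal : (m.choose b : ℝ) * (m + 1) = (m + 1).choose b * ((m : ℝ) + 1 - b) := by
    rw [← Nat.cast_add_one, ← Nat.cast_sub hbn]
    exact_mod_cast Nat.choose_mul_succ_eq m b
  rw [hout, card_powersetCard, card_erase_of_mem (mem_univ i), card_univ, Fintype.card_fin,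
    Nat.add_sub_cancel]
  field_simp
  linarith

lemma card_filter_mem_powersetCard_div_choose (hbn : b ≤ m + 1) (i : Fin (m + 1)) :
    (#{S ∈ powersetCard b (univ : Finset (Fin (m + 1))) | i ∈ S} : ℝ) / (m + 1).choose b =
      b / (m + 1) := by
  have hC : (0 : ℝ) < (m + 1).choose b := by exact_mod_cast Nat.choose_pos hbn
  have hsplit := card_filter_add_card_filter_not (s := powersetCard b (univ : Finset (Fin (m + 1))))
    (i ∈ ·)
  rw [card_powersetCard, card_univ, Fintype.card_fin] at hsplit
  have hin : (#{S ∈ powersetCard b (univ : Finset (Fin (m + 1))) | i ∈ S} : ℝ) =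
      (m + 1).choose b - #{S ∈ powersetCard b (univ : Finset (Fin (m + 1))) | i ∉ S} := by
    rw [← hsplit]; push_cast; ring
  rw [hin, sub_div, div_self hC.ne', card_filter_not_mem_powersetCard_div_choose hbn i]
  ring

end Counting

section Mechanism

variable (σ : ℝ) {m b : ℕ}

lemma worGauss_apply_toReal {n : ℕ} (x : Fin n → ℝ) (E : Set ℝ) :
    (worGauss σ b x E).toReal = (n.choose b : ℝ)⁻¹ *
      ∑ S ∈ powersetCard b univ, (gaussianReal (∑ i ∈ S, x i) ⟨σ ^ 2, sq_nonneg σ⟩ E).toReal := by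
  rw [worGauss]
  -- Instance search does not see through `ℝ≥0` to the subtype literal `⟨σ ^ 2, _⟩`.
  set v : ℝ≥0 := ⟨σ ^ 2, sq_nonneg σ⟩
  rw [Measure.smul_apply, Measure.finsetSum_apply, smul_eq_mul, ENNReal.toReal_mul,
    ENNReal.toReal_inv, ENNReal.toReal_sum fun _ _ => measure_ne_top _ _, ENNReal.toReal_natCast]

lemma worGauss_const {n : ℕ} (hbn : b ≤ n) (c : ℝ) :
    worGauss σ b (fun _ : Fin n => c) = gaussianReal (b * c) ⟨σ ^ 2, sq_nonneg σ⟩ := by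
  have hS : ∀ S ∈ powersetCard b (univ : Finset (Fin n)),
      gaussianReal (∑ _i ∈ S, c) ⟨σ ^ 2, sq_nonneg σ⟩ = gaussianReal (b * c) ⟨σ ^ 2, sq_nonneg σ⟩ :=
    fun S hS => by rw [sum_const, (mem_powersetCard.1 hS).2, nsmul_eq_mul]
  rw [worGauss, sum_congr rfl hS, sum_const, card_powersetCard, card_univ, Fintype.card_fin,
    ← Nat.cast_smul_eq_nsmul ℝ≥0∞, smul_smul,
    ENNReal.inv_mul_cancel (by exact_mod_cast (Nat.choose_pos hbn).ne') (ENNReal.natCast_ne_top _),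
    one_smul]

lemma worGauss_eq_of_sum_eq_ite (hbn : b ≤ m + 1) {γ : ℝ} (hγ : γ = b / (m + 1))
    (i : Fin (m + 1)) {x : Fin (m + 1) → ℝ} {c₀ c₁ : ℝ}
    (hx : ∀ S ∈ powersetCard b univ, ∑ k ∈ S, x k = if i ∈ S then c₁ else c₀) :
    worGauss σ b x = ENNReal.ofReal (1 - γ) • gaussianReal c₀ ⟨σ ^ 2, sq_nonneg σ⟩ +
      ENNReal.ofReal γ • gaussianReal c₁ ⟨σ ^ 2, sq_nonneg σ⟩ := by
  have hC : (0 : ℝ) < (m + 1).choose b := by exact_mod_cast Nat.choose_pos hbn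
  have hcast : ∀ k : ℕ, ((m + 1).choose b : ℝ≥0∞)⁻¹ * k = ENNReal.ofReal (k / (m + 1).choose b) :=
    fun k => by
      rw [ENNReal.ofReal_div_of_pos hC, ENNReal.ofReal_natCast, ENNReal.ofReal_natCast,
        ENNReal.div_eq_inv_mul]
  have hS : ∀ S ∈ powersetCard b univ, gaussianReal (∑ k ∈ S, x k) ⟨σ ^ 2, sq_nonneg σ⟩ =
      if i ∈ S then gaussianReal c₁ ⟨σ ^ 2, sq_nonneg σ⟩
      else gaussianReal c₀ ⟨σ ^ 2, sq_nonneg σ⟩ :=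
    fun S hS => by rw [hx S hS]; split_ifs <;> rfl
  rw [worGauss, sum_congr rfl hS, sum_ite, sum_const, sum_const, ← Nat.cast_smul_eq_nsmul ℝ≥0∞,
    ← Nat.cast_smul_eq_nsmul ℝ≥0∞, smul_add, smul_smul, smul_smul, hcast, hcast,
    card_filter_mem_powersetCard_div_choose hbn, card_filter_not_mem_powersetCard_div_choose hbn,
    hγ, add_comm]

lemma sum_snoc_neg_one_one {S : Finset (Fin (m + 1))} (hS : #S = b) :
    ∑ k ∈ S, (Fin.snoc (fun _ : Fin m => (-1 : ℝ)) 1 : Fin (m + 1) → ℝ) k =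
      if Fin.last m ∈ S then 2 - (b : ℝ) else -(b : ℝ) := by
  have hsnoc : ∀ k, (Fin.snoc (fun _ : Fin m => (-1 : ℝ)) 1 : Fin (m + 1) → ℝ) k =
      -1 + if k = Fin.last m then 2 else 0 := by
    refine Fin.lastCases ?_ fun j => ?_ <;> norm_num
  rw [sum_congr rfl fun k _ => hsnoc k, sum_add_distrib, sum_const, hS, sum_ite_eq']
  split_ifs <;> simp only [nsmul_eq_mul] <;> ring

end Mechanism

lemma worGauss_apply_sub_mul_le (σ : ℝ) {m b : ℕ} (hb : 1 ≤ b) (hbn : b ≤ m + 1) {γ : ℝ}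
    (hγ : γ = b / (m + 1)) {D D' : Fin (m + 1) → ℝ} (hD : ∀ j, D j ∈ Set.Icc (-1 : ℝ) 1)
    {i : Fin (m + 1)} (hD'i : D' i ∈ Set.Icc (-1 : ℝ) 1) (hDD' : ∀ j, j ≠ i → D j = D' j)
    {α : ℝ} (hα : 1 ≤ α) {E : Set ℝ} (hE : MeasurableSet E) :
    (worGauss σ b D E).toReal - α * (worGauss σ b D' E).toReal ≤
      γ * hsDiv ((α - 1 + γ) / γ) (gaussianReal (2 - b) ⟨σ ^ 2, sq_nonneg σ⟩)
        (gaussianReal (-b) ⟨σ ^ 2, sq_nonneg σ⟩) := by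
  set v : ℝ≥0 := ⟨σ ^ 2, sq_nonneg σ⟩
  set F : ℝ → ℝ := fun c => (gaussianReal c v E).toReal
  set H := hsDiv ((α - 1 + γ) / γ) (gaussianReal (2 - b) v) (gaussianReal (-b) v)
  have hdist : ∀ x ∈ Set.Icc (-1 : ℝ) 1, ∀ y ∈ Set.Icc (-1 : ℝ) 1,
      |x - y| ≤ |(2 - b : ℝ) - -b| := fun x hx y hy => by
    rw [show (2 - b : ℝ) - -b = 2 by ring, abs_two, abs_le]
    constructor <;> linarith [hx.1, hx.2, hy.1, hy.2]
  have hS : ∀ S ∈ {S ∈ powersetCard b (univ : Finset (Fin (m + 1))) | i ∈ S},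
      F (∑ k ∈ S, D k) - α * F (∑ k ∈ S, D' k) -
        (α - 1) / b * ∑ j ∈ univ \ S, F (∑ k ∈ insert j (S.erase i), D k) ≤ H := by
    intro S hS
    obtain ⟨hSb, hiS⟩ := mem_filter.1 hS
    have hc : α + (α - 1) / b * #(univ \ S) = (α - 1 + γ) / γ := by
      rw [card_sdiff_of_subset (subset_univ S), card_univ, Fintype.card_fin,
        (mem_powersetCard.1 hSb).2, Nat.cast_sub hbn, hγ]
      field_simp
      push_cast
      ring
    refine (sub_mul_sub_mul_sum_le_hsDiv_gaussianReal v (by linarith)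
      (div_nonneg (by linarith) (Nat.cast_nonneg b)) ?_ (fun j hj => ?_) hE).trans_eq (by rw [hc])
    · rw [← sum_sub_distrib, sum_eq_single_of_mem i hiS fun k _ hk => by rw [hDD' k hk, sub_self]]
      exact hdist _ (hD i) _ hD'i
    · have hjS : j ∉ S.erase i := fun h => (mem_sdiff.1 hj).2 (mem_of_mem_erase h)
      rw [sum_insert hjS, ← add_sum_erase S D hiS, add_sub_add_right_eq_sub]
      exact hdist _ (hD i) _ (hD j)
  have hC : (0 : ℝ) ≤ ((m + 1).choose b : ℝ)⁻¹ := by positivity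
  have hsplit := sum_sub_mul_sum_eq_sum_filter_mem (b := b) (by omega) i
    (G := fun S => F (∑ k ∈ S, D k)) (G' := fun S => F (∑ k ∈ S, D' k))
    (fun S hiS => congrArg F (sum_congr rfl fun k hk => hDD' k (ne_of_mem_of_not_mem hk hiS))) α
  rw [worGauss_apply_toReal, worGauss_apply_toReal, mul_left_comm, ← mul_sub]
  calc _ = ((m + 1).choose b : ℝ)⁻¹ * _ := congrArg _ hsplit
    _ ≤ ((m + 1).choose b : ℝ)⁻¹ * (#{S ∈ powersetCard b univ | i ∈ S} * H) :=
        mul_le_mul_of_nonneg_left ((sum_le_card_nsmul _ _ _ hS).trans_eq (nsmul_eq_mul _ _)) hC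
    _ = γ * H := by
        rw [← mul_assoc, inv_mul_eq_div, card_filter_mem_powersetCard_div_choose hbn, hγ]

theorem worGauss_substitution_worst_case_general (σ : ℝ) (m b : ℕ) (hb1 : 1 ≤ b)
    (hbn : b ≤ m + 1) (γ : ℝ) (hγ : γ = (b : ℝ) / (m + 1)) :
    (∀ D D' : Fin (m + 1) → ℝ,
      (∀ j, D j ∈ Set.Icc (-1 : ℝ) 1) → (∀ j, D' j ∈ Set.Icc (-1 : ℝ) 1) →
      (∃ i : Fin (m + 1), D i ≠ D' i ∧ ∀ j : Fin (m + 1), j ≠ i → D j = D' j) →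
      ∀ α : ℝ, 1 ≤ α →
        hsDiv α (worGauss σ b D) (worGauss σ b D') ≤
          hsDiv α
            (ENNReal.ofReal (1 - γ) • gaussianReal (-(b : ℝ)) ⟨σ ^ 2, sq_nonneg σ⟩ +
              ENNReal.ofReal γ • gaussianReal (2 - (b : ℝ)) ⟨σ ^ 2, sq_nonneg σ⟩)
            (gaussianReal (-(b : ℝ)) ⟨σ ^ 2, sq_nonneg σ⟩)) ∧
    worGauss σ b (Fin.snoc (fun _ : Fin m => (-1 : ℝ)) 1) =
      ENNReal.ofReal (1 - γ) • gaussianReal (-(b : ℝ)) ⟨σ ^ 2, sq_nonneg σ⟩ +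
        ENNReal.ofReal γ • gaussianReal (2 - (b : ℝ)) ⟨σ ^ 2, sq_nonneg σ⟩ ∧
    worGauss σ b (fun _ : Fin (m + 1) => (-1 : ℝ)) =
      gaussianReal (-(b : ℝ)) ⟨σ ^ 2, sq_nonneg σ⟩ := by
  set v : ℝ≥0 := ⟨σ ^ 2, sq_nonneg σ⟩
  have hγ0 : 0 < γ := by rw [hγ]; positivity
  have hγ1 : γ ≤ 1 := by rw [hγ, div_le_one (by positivity)]; exact_mod_cast hbn
  refine ⟨fun D D' hD hD' ⟨i, _, hDD'⟩ α hα => ?_,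
    worGauss_eq_of_sum_eq_ite σ hbn hγ (Fin.last m) fun S hS =>
      sum_snoc_neg_one_one (mem_powersetCard.1 hS).2, ?_⟩
  · rw [hsDiv_smul_add_smul_self α hγ0 hγ1]
    exact hsDiv_le fun E hE => worGauss_apply_sub_mul_le σ hb1 hbn hγ hD (hD' i) hDD' hα hE
  · rw [worGauss_const σ hbn, mul_neg_one]

/-- Worst-case substitution datasets for a single iteration of the without-replacement
subsampled Gaussian mechanism at `ε ≥ 0` (i.e. `α ≥ 1`), with `n = m + 1`, `1 ≤ b ≤ n`, and
`γ = b/n`: for tuples `D, D' ∈ [−1,1]^n` differing in exactly one entry and `α ≥ 1`,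
`H_α(M_{n,b}(D) ‖ M_{n,b}(D')) ≤ H_α((1−γ)N(−b,σ²) + γN(2−b,σ²) ‖ N(−b,σ²))`, and the bound
is realized by `D = (−1,…,−1,1)`, `D' = (−1,…,−1,−1)`. -/
theorem worGauss_substitution_worst_case (σ : ℝ) (hσ : 0 < σ) (m b : ℕ) (hb1 : 1 ≤ b)
    (hbn : b ≤ m + 1) (γ : ℝ) (hγ : γ = (b : ℝ) / (m + 1)) :
    (∀ D D' : Fin (m + 1) → ℝ,
      (∀ j, D j ∈ Set.Icc (-1 : ℝ) 1) → (∀ j, D' j ∈ Set.Icc (-1 : ℝ) 1) →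
      (∃ i : Fin (m + 1), D i ≠ D' i ∧ ∀ j : Fin (m + 1), j ≠ i → D j = D' j) →
      ∀ α : ℝ, 1 ≤ α →
        hsDiv α (worGauss σ b D) (worGauss σ b D') ≤
          hsDiv α
            (ENNReal.ofReal (1 - γ) • gaussianReal (-(b : ℝ)) ⟨σ ^ 2, sq_nonneg σ⟩ +
              ENNReal.ofReal γ • gaussianReal (2 - (b : ℝ)) ⟨σ ^ 2, sq_nonneg σ⟩)
            (gaussianReal (-(b : ℝ)) ⟨σ ^ 2, sq_nonneg σ⟩)) ∧
    worGauss σ b (Fin.snoc (fun _ : Fin m => (-1 : ℝ)) 1) =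
      ENNReal.ofReal (1 - γ) • gaussianReal (-(b : ℝ)) ⟨σ ^ 2, sq_nonneg σ⟩ +
        ENNReal.ofReal γ • gaussianReal (2 - (b : ℝ)) ⟨σ ^ 2, sq_nonneg σ⟩ ∧
    worGauss σ b (fun _ : Fin (m + 1) => (-1 : ℝ)) =
      gaussianReal (-(b : ℝ)) ⟨σ ^ 2, sq_nonneg σ⟩ :=
  worGauss_substitution_worst_case_general σ m b hb1 hbn γ hγ
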